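/- arXiv:1609.03125 — 3 statements merged into one kernel-verified Lean document; each statement's English description precedes it below -/
import Mathlib

section
/- With notation as above (X₁ = ∂_z + ε(2wz̄)/(1+ε|z|²)∂_w, X₂ its conjugate, a(z,w) = sqrt(c1 + 4ε|w|²/(1+ε|z|²)²)), the function a is annihilated by both horizontal fields: X₁(a) = 0 and X₂(a) = 0. -/
/-!
`a = √(c1 + 4ε r)` is a function of the single real quantity `r = |w|² / (1 + ε|z|²)²`, and on
real-valued functions a complex vector field acts as a derivation that obeys the chain rule,
so `X(a) = (2a)⁻¹ · 4ε · X(r)`. For `X = X₁` the quotient rule gives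
`(1 + ε|z|²)³ X₁(r) = (1 + ε|z|²) · X₁(|w|²) - 2ε|w|² · X₁(|z|²)`, and with `X₁(|z|²) = z̄`,
`X₁(|w|²) = 2ε w z̄ w̄ / (1 + ε|z|²)` the two terms cancel; `X₂` is the conjugate computation.
-/

open Complex

/-- Wirtinger derivative `∂/∂z` (first coordinate) of `f : ℂ² → ℂ`. -/
noncomputable def dz (f : ℂ × ℂ → ℂ) (p : ℂ × ℂ) : ℂ :=
  (1 / 2) * (fderiv ℝ f p (1, 0) - Complex.I * fderiv ℝ f p (Complex.I, 0))

/-- Wirtinger derivative `∂/∂z̄`. -/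
noncomputable def dzb (f : ℂ × ℂ → ℂ) (p : ℂ × ℂ) : ℂ :=
  (1 / 2) * (fderiv ℝ f p (1, 0) + Complex.I * fderiv ℝ f p (Complex.I, 0))

/-- Wirtinger derivative `∂/∂w` (second coordinate). -/
noncomputable def dw (f : ℂ × ℂ → ℂ) (p : ℂ × ℂ) : ℂ :=
  (1 / 2) * (fderiv ℝ f p (0, 1) - Complex.I * fderiv ℝ f p (0, Complex.I))

/-- Wirtinger derivative `∂/∂w̄`. -/
noncomputable def dwb (f : ℂ × ℂ → ℂ) (p : ℂ × ℂ) : ℂ :=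
  (1 / 2) * (fderiv ℝ f p (0, 1) + Complex.I * fderiv ℝ f p (0, Complex.I))

/-- A complex vector field on `ℂ²`, given by its coefficients in the frame
`(∂_z, ∂_z̄, ∂_w, ∂_w̄)`. -/
abbrev VF := ℂ × ℂ → ℂ × ℂ × ℂ × ℂ

/-- Action of a complex vector field on a function. -/
noncomputable def appVF (X : VF) (f : ℂ × ℂ → ℂ) (p : ℂ × ℂ) : ℂ :=
  (X p).1 * dz f p + (X p).2.1 * dzb f p + (X p).2.2.1 * dw f p +
    (X p).2.2.2 * dwb f p

/-- Lie bracket of complex vector fields (in coefficients). -/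
noncomputable def bracketVF (X Y : VF) : VF := fun p =>
  (appVF X (fun q => (Y q).1) p - appVF Y (fun q => (X q).1) p,
   appVF X (fun q => (Y q).2.1) p - appVF Y (fun q => (X q).2.1) p,
   appVF X (fun q => (Y q).2.2.1) p - appVF Y (fun q => (X q).2.2.1) p,
   appVF X (fun q => (Y q).2.2.2) p - appVF Y (fun q => (X q).2.2.2) p)

/-- Conjugate of a complex vector field: coefficients are conjugated and the
frame vectors `∂_z ↔ ∂_z̄`, `∂_w ↔ ∂_w̄` are swapped. -/
noncomputable def conjVF (X : VF) : VF := fun p =>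
  ((starRingEnd ℂ) (X p).2.1, (starRingEnd ℂ) (X p).1,
   (starRingEnd ℂ) (X p).2.2.2, (starRingEnd ℂ) (X p).2.2.1)

/-- The horizontal lift `X₁ = ∂_z + ε(2wz̄)/(1+ε|z|²) ∂_w`. -/
noncomputable def X₁ (ε : ℝ) : VF := fun p =>
  (1, 0, (ε : ℂ) * 2 * p.2 * (starRingEnd ℂ) p.1 /
    ((1 + ε * Complex.normSq p.1 : ℝ) : ℂ), 0)

/-- The horizontal lift `X₂ = ∂_z̄ + ε(2w̄z)/(1+ε|z|²) ∂_w̄`. -/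
noncomputable def X₂ (ε : ℝ) : VF := fun p =>
  (0, 1, 0, (ε : ℂ) * 2 * (starRingEnd ℂ) p.2 * p.1 /
    ((1 + ε * Complex.normSq p.1 : ℝ) : ℂ))

/-- The weight function `a = sqrt (c1 + 4ε|w|²/(1+ε|z|²)²)`, as a `ℂ`-valued
function on `ℂ²`. -/
noncomputable def wfun (ε c1 : ℝ) (p : ℂ × ℂ) : ℂ :=
  ((Real.sqrt (c1 + ε * 4 * Complex.normSq p.2 /
    (1 + ε * Complex.normSq p.1) ^ 2) : ℝ) : ℂ)

open ComplexConjugate ContinuousLinearMap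

noncomputable def realCovectorApp (X : VF) (p : ℂ × ℂ) : (ℂ × ℂ →L[ℝ] ℝ) →ₗ[ℝ] ℂ where
  toFun L := (X p).1 * (((L (1, 0) : ℂ) - I * L (I, 0)) / 2)
    + (X p).2.1 * (((L (1, 0) : ℂ) + I * L (I, 0)) / 2)
    + (X p).2.2.1 * (((L (0, 1) : ℂ) - I * L (0, I)) / 2)
    + (X p).2.2.2 * (((L (0, 1) : ℂ) + I * L (0, I)) / 2)
  map_add' L M := by simp only [add_apply, ofReal_add]; ring
  map_smul' c L := by
    simp only [smul_apply, smul_eq_mul, ofReal_mul, RingHom.id_apply,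
      real_smul]
    ring

theorem appVF_ofReal {X : VF} {p : ℂ × ℂ} {u : ℂ × ℂ → ℝ} (hu : DifferentiableAt ℝ u p) :
    appVF X (fun q => (u q : ℂ)) p = realCovectorApp X p (fderiv ℝ u p) := by
  have h : fderiv ℝ (fun q => (u q : ℂ)) p = ofRealCLM.comp (fderiv ℝ u p) :=
    (ofRealCLM.hasFDerivAt.comp p hu.hasFDerivAt).fderiv
  simp only [appVF, dz, dzb, dw, dwb, h, realCovectorApp, comp_apply,
    ofRealCLM_apply, LinearMap.coe_mk, AddHom.coe_mk]
  ring

theorem appVF_ofReal_comp {X : VF} {p : ℂ × ℂ} {u : ℂ × ℂ → ℝ} {φ : ℝ → ℝ} {φ' : ℝ}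
    (hφ : HasDerivAt φ φ' (u p)) (hu : DifferentiableAt ℝ u p) :
    appVF X (fun q => (φ (u q) : ℂ)) p = φ' * appVF X (fun q => (u q : ℂ)) p := by
  have h : HasFDerivAt (fun q => φ (u q)) (φ' • fderiv ℝ u p) p :=
    hφ.comp_hasFDerivAt p hu.hasFDerivAt
  rw [appVF_ofReal h.differentiableAt, h.fderiv, map_smul, appVF_ofReal hu, real_smul]

theorem appVF_ofReal_mul {X : VF} {p : ℂ × ℂ} {u v : ℂ × ℂ → ℝ}
    (hu : DifferentiableAt ℝ u p) (hv : DifferentiableAt ℝ v p) :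
    appVF X (fun q => ((u q * v q : ℝ) : ℂ)) p =
      u p * appVF X (fun q => (v q : ℂ)) p + v p * appVF X (fun q => (u q : ℂ)) p := by
  rw [appVF_ofReal (hu.fun_mul hv), fderiv_fun_mul hu hv, map_add, map_smul, map_smul,
    appVF_ofReal hu, appVF_ofReal hv, real_smul, real_smul]

theorem hasFDerivAt_normSq (z : ℂ) :
    HasFDerivAt normSq ((2 : ℝ) • innerSL ℝ z) z := by
  have := (hasStrictFDerivAt_norm_sq z).hasFDerivAt
  simp only [← normSq_eq_norm_sq] at this
  exact_mod_cast this

theorem hasFDerivAt_normSq_fst (p : ℂ × ℂ) :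
    HasFDerivAt (fun q : ℂ × ℂ => normSq q.1)
      (((2 : ℝ) • innerSL ℝ p.1).comp (fst ℝ ℂ ℂ)) p :=
  (hasFDerivAt_normSq p.1).comp p hasFDerivAt_fst

theorem hasFDerivAt_normSq_snd (p : ℂ × ℂ) :
    HasFDerivAt (fun q : ℂ × ℂ => normSq q.2)
      (((2 : ℝ) • innerSL ℝ p.2).comp (snd ℝ ℂ ℂ)) p :=
  (hasFDerivAt_normSq p.2).comp p hasFDerivAt_snd

theorem appVF_normSq_fst (X : VF) (p : ℂ × ℂ) :
    appVF X (fun q => (normSq q.1 : ℂ)) p = (X p).1 * conj p.1 + (X p).2.1 * p.1 := by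
  rw [appVF_ofReal (hasFDerivAt_normSq_fst p).differentiableAt,
    (hasFDerivAt_normSq_fst p).fderiv]
  simp [realCovectorApp, Complex.ext_iff]
  constructor <;> ring

theorem appVF_normSq_snd (X : VF) (p : ℂ × ℂ) :
    appVF X (fun q => (normSq q.2 : ℂ)) p = (X p).2.2.1 * conj p.2 + (X p).2.2.2 * p.2 := by
  rw [appVF_ofReal (hasFDerivAt_normSq_snd p).differentiableAt,
    (hasFDerivAt_normSq_snd p).fderiv]
  simp [realCovectorApp, Complex.ext_iff]
  constructor <;> ring

noncomputable def normSqRatio (ε : ℝ) (q : ℂ × ℂ) : ℝ :=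
  normSq q.2 / (1 + ε * normSq q.1) ^ 2

theorem appVF_normSqRatio {X : VF} {ε : ℝ} {p : ℂ × ℂ} (hz : 1 + ε * normSq p.1 ≠ 0) :
    appVF X (fun q => (normSqRatio ε q : ℂ)) p =
      ((1 + ε * normSq p.1) * appVF X (fun q => (normSq q.2 : ℂ)) p
        - 2 * ε * normSq p.2 * appVF X (fun q => (normSq q.1 : ℂ)) p) /
      (1 + ε * normSq p.1) ^ 3 := by
  have hψ : HasDerivAt (fun s : ℝ => ((1 + ε * s) ^ 2)⁻¹)
      (-(2 * ε) / (1 + ε * normSq p.1) ^ 3) (normSq p.1) := by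
    refine ((((hasDerivAt_id' _).const_mul ε).const_add 1).fun_pow 2).inv
      (pow_ne_zero 2 hz) |>.congr_deriv ?_
    field_simp
    ring
  have hratio : (fun q => (normSqRatio ε q : ℂ)) =
      fun q => ((normSq q.2 * ((1 + ε * normSq q.1) ^ 2)⁻¹ : ℝ) : ℂ) := by
    simp only [normSqRatio, div_eq_mul_inv]
  have hn₁ := (hasFDerivAt_normSq_fst p).differentiableAt
  have hψn₁ : DifferentiableAt ℝ (fun q : ℂ × ℂ => ((1 + ε * normSq q.1) ^ 2)⁻¹) p :=
    DifferentiableAt.comp (g := fun s : ℝ => ((1 + ε * s) ^ 2)⁻¹) p hψ.differentiableAt hn₁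
  have hz' : (1 + ε * normSq p.1 : ℂ) ≠ 0 := by exact_mod_cast hz
  rw [hratio, appVF_ofReal_mul (hasFDerivAt_normSq_snd p).differentiableAt hψn₁,
    appVF_ofReal_comp hψ hn₁]
  push_cast
  field_simp
  ring

theorem differentiableAt_normSqRatio {ε : ℝ} {p : ℂ × ℂ} (hz : 1 + ε * normSq p.1 ≠ 0) :
    DifferentiableAt ℝ (normSqRatio ε) p := by
  have hD : DifferentiableAt ℝ (fun q : ℂ × ℂ => (1 + ε * normSq q.1) ^ 2) p :=
    ((hasFDerivAt_normSq_fst p).differentiableAt.const_mul ε).const_add 1 |>.fun_pow 2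
  unfold normSqRatio
  simp only [div_eq_mul_inv]
  exact (hasFDerivAt_normSq_snd p).differentiableAt.fun_mul (hD.fun_inv (pow_ne_zero 2 hz))

theorem appVF_X₁_normSqRatio {ε : ℝ} {p : ℂ × ℂ} (hz : 1 + ε * normSq p.1 ≠ 0) :
    appVF (X₁ ε) (fun q => (normSqRatio ε q : ℂ)) p = 0 := by
  rw [appVF_normSqRatio hz, appVF_normSq_fst, appVF_normSq_snd]
  have hz' : (1 + ε * normSq p.1 : ℂ) ≠ 0 := by exact_mod_cast hz
  simp only [X₁]
  push_cast
  field_simp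
  linear_combination (ε * 2 * conj p.1) * Complex.mul_conj p.2

theorem appVF_X₂_normSqRatio {ε : ℝ} {p : ℂ × ℂ} (hz : 1 + ε * normSq p.1 ≠ 0) :
    appVF (X₂ ε) (fun q => (normSqRatio ε q : ℂ)) p = 0 := by
  rw [appVF_normSqRatio hz, appVF_normSq_fst, appVF_normSq_snd]
  have hz' : (1 + ε * normSq p.1 : ℂ) ≠ 0 := by exact_mod_cast hz
  simp only [X₂]
  push_cast
  field_simp
  linear_combination (ε * 2 * p.1) * Complex.mul_conj p.2

theorem wfun_eq_sqrt_normSqRatio (ε c1 : ℝ) :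
    wfun ε c1 = fun q => ((√(c1 + ε * 4 * normSqRatio ε q) : ℝ) : ℂ) := by
  funext q
  simp only [wfun, normSqRatio, mul_div_assoc]

theorem stmt_9_general (ε c1 : ℝ) (p : ℂ × ℂ)
    (hz : 0 < 1 + ε * Complex.normSq p.1)
    (ha : 0 < c1 + ε * 4 * Complex.normSq p.2 / (1 + ε * Complex.normSq p.1) ^ 2) :
    appVF (X₁ ε) (wfun ε c1) p = 0 ∧ appVF (X₂ ε) (wfun ε c1) p = 0 := by
  have hsqrt : HasDerivAt (fun t => √(c1 + ε * 4 * t)) _ (normSqRatio ε p) :=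
    (((hasDerivAt_id' _).const_mul (ε * 4)).const_add c1).sqrt
      (by simpa only [normSqRatio, mul_div_assoc] using ha.ne')
  have hratio := differentiableAt_normSqRatio hz.ne'
  rw [wfun_eq_sqrt_normSqRatio, appVF_ofReal_comp hsqrt hratio, appVF_ofReal_comp hsqrt hratio,
    appVF_X₁_normSqRatio hz.ne', appVF_X₂_normSqRatio hz.ne']
  exact ⟨mul_zero _, mul_zero _⟩

/-- The weight function `a` is annihilated by the horizontal lifts:
`X₁(a) = 0` and `X₂(a) = 0`. -/
theorem stmt_9 (ε c1 : ℝ) (hε : ε = 1 ∨ ε = -1) (hc1 : 0 < c1) (p : ℂ × ℂ)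
    (hz : 0 < 1 + ε * Complex.normSq p.1)
    (ha : 0 < c1 + ε * 4 * Complex.normSq p.2 / (1 + ε * Complex.normSq p.1) ^ 2) :
    appVF (X₁ ε) (wfun ε c1) p = 0 ∧ appVF (X₂ ε) (wfun ε c1) p = 0 :=
  stmt_9_general ε c1 p hz ha
end

section
/- With a(z,w) = sqrt(c1 + 4ε|w|²/(1+ε|z|²)²) and X₁, X₂ as above, one has [X₁, X₂] = [a ∂_w, a ∂_{w̄}] as vector fields, i.e. both brackets equal ε·(2/(1+ε|z|²)²)(w̄ ∂_{w̄} − w ∂_w). -/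
open Complex

open ComplexConjugate

/-! Both brackets are computed with the Leibniz rule for the Wirtinger derivatives. Since `X₂` is
the conjugate of `X₁`, `[X₁, X₂]` only needs `∂_z̄` of the coefficient `2εw z̄/(1+ε|z|²)` of `X₁`,
which is `2εw/(1+ε|z|²)²`. For `[a ∂_w, a ∂_w̄] = a (∂_w a) ∂_w̄ - a (∂_w̄ a) ∂_w` one uses
`a ∂_w̄ a = ½ ∂_w̄ (a²)`, where `a² = c1 + 4ε w w̄/(1+ε|z|²)²` is rational in `z, z̄, w, w̄`;
as `a` is real, `∂_w a` is the conjugate of `∂_w̄ a`. -/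

/-- `∂/∂ū` as a `ℂ`-linear functional on real derivatives; its `ℂ`-linearity turns the product
rule for `fderiv` into the Leibniz rule for `∂/∂ū`. -/
noncomputable def wirtingerBar (u : ℂ × ℂ) : (ℂ × ℂ →L[ℝ] ℂ) →ₗ[ℂ] ℂ where
  toFun L := (1 / 2) * (L u + I * L (I • u))
  map_add' L M := by simp only [add_apply]; ring
  map_smul' c L := by simp only [smul_apply, smul_eq_mul, RingHom.id_apply]; ring

lemma dzb_eq_wirtingerBar (f : ℂ × ℂ → ℂ) (p : ℂ × ℂ) :
    dzb f p = wirtingerBar (1, 0) (fderiv ℝ f p) := by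
  simp [dzb, wirtingerBar]

lemma dwb_eq_wirtingerBar (f : ℂ × ℂ → ℂ) (p : ℂ × ℂ) :
    dwb f p = wirtingerBar (0, 1) (fderiv ℝ f p) := by
  simp [dwb, wirtingerBar]

section Leibniz

variable (u : ℂ × ℂ) {f g : ℂ × ℂ → ℂ} {p : ℂ × ℂ}

lemma wirtingerBar_fderiv_mul (hf : DifferentiableAt ℝ f p) (hg : DifferentiableAt ℝ g p) :
    wirtingerBar u (fderiv ℝ (fun q => f q * g q) p) =
      f p * wirtingerBar u (fderiv ℝ g p) + g p * wirtingerBar u (fderiv ℝ f p) := by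
  rw [fderiv_fun_mul hf hg, map_add, map_smul, map_smul, smul_eq_mul, smul_eq_mul]

lemma wirtingerBar_fderiv_inv (hf : DifferentiableAt ℝ f p) (hp : f p ≠ 0) :
    wirtingerBar u (fderiv ℝ (fun q => (f q)⁻¹) p) =
      -(f p ^ 2)⁻¹ * wirtingerBar u (fderiv ℝ f p) := by
  have : fderiv ℝ (fun q => (f q)⁻¹) p = -(f p ^ 2)⁻¹ • fderiv ℝ f p := by
    rw [← Function.comp_def Inv.inv f, fderiv_comp p (differentiableAt_inv hp) hf,
      fderiv_inv' hp]
    refine ContinuousLinearMap.ext fun v => ?_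
    simp only [ContinuousLinearMap.neg_comp, neg_apply, ContinuousLinearMap.comp_apply,
      ContinuousLinearMap.mulLeftRight_apply, smul_apply, smul_eq_mul]
    ring
  rw [this, map_smul, smul_eq_mul]

lemma wirtingerBar_fderiv_const_add (c : ℂ) :
    wirtingerBar u (fderiv ℝ (fun q => c + f q) p) = wirtingerBar u (fderiv ℝ f p) := by
  rw [fderiv_const_add]

lemma wirtingerBar_fderiv_const (c : ℂ) : wirtingerBar u (fderiv ℝ (fun _ => c) p) = 0 := by
  rw [fderiv_fun_const, Pi.zero_apply, map_zero]

lemma wirtingerBar_fderiv_fst : wirtingerBar u (fderiv ℝ (fun q : ℂ × ℂ => q.1) p) = 0 := by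
  simp [wirtingerBar, fderiv_fst, ← mul_assoc]

lemma wirtingerBar_fderiv_snd : wirtingerBar u (fderiv ℝ (fun q : ℂ × ℂ => q.2) p) = 0 := by
  simp [wirtingerBar, fderiv_snd, ← mul_assoc]

lemma wirtingerBar_fderiv_conj_fst :
    wirtingerBar u (fderiv ℝ (fun q : ℂ × ℂ => conj q.1) p) = conj u.1 := by
  have : fderiv ℝ (fun q : ℂ × ℂ => conj q.1) p = conjCLE.toContinuousLinearMap.comp
      (ContinuousLinearMap.fst ℝ ℂ ℂ) :=
    (conjCLE.hasFDerivAt.comp p hasFDerivAt_fst).fderiv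
  simp only [this, wirtingerBar, LinearMap.coe_mk, AddHom.coe_mk, ContinuousLinearMap.comp_apply,
    ContinuousLinearMap.coe_fst', ContinuousLinearEquiv.coe_coe, conjCLE_apply, Prod.smul_fst,
    smul_eq_mul, map_mul, conj_I]
  ring_nf
  rw [I_sq]
  ring

lemma wirtingerBar_fderiv_conj_snd :
    wirtingerBar u (fderiv ℝ (fun q : ℂ × ℂ => conj q.2) p) = conj u.2 := by
  have : fderiv ℝ (fun q : ℂ × ℂ => conj q.2) p = conjCLE.toContinuousLinearMap.comp
      (ContinuousLinearMap.snd ℝ ℂ ℂ) :=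
    (conjCLE.hasFDerivAt.comp p hasFDerivAt_snd).fderiv
  simp only [this, wirtingerBar, LinearMap.coe_mk, AddHom.coe_mk, ContinuousLinearMap.comp_apply,
    ContinuousLinearMap.coe_snd', ContinuousLinearEquiv.coe_coe, conjCLE_apply, Prod.smul_snd,
    smul_eq_mul, map_mul, conj_I]
  ring_nf
  rw [I_sq]
  ring

end Leibniz

lemma dz_const (c : ℂ) (p : ℂ × ℂ) : dz (fun _ => c) p = 0 := by simp [dz]

lemma dzb_const (c : ℂ) (p : ℂ × ℂ) : dzb (fun _ => c) p = 0 := by simp [dzb]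

lemma dw_const (c : ℂ) (p : ℂ × ℂ) : dw (fun _ => c) p = 0 := by simp [dw]

lemma dwb_const (c : ℂ) (p : ℂ × ℂ) : dwb (fun _ => c) p = 0 := by simp [dwb]

lemma fderiv_conj_apply (f : ℂ × ℂ → ℂ) (p v : ℂ × ℂ) :
    fderiv ℝ (fun q => conj (f q)) p v = conj (fderiv ℝ f p v) :=
  congrArg (· v) (conjCLE.comp_fderiv (f := f))

lemma dz_conj (f : ℂ × ℂ → ℂ) (p : ℂ × ℂ) : dz (fun q => conj (f q)) p = conj (dzb f p) := by
  simp only [dz, dzb, fderiv_conj_apply, map_mul, map_add, map_div₀, map_one, map_ofNat, conj_I]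
  ring

lemma dw_conj (f : ℂ × ℂ → ℂ) (p : ℂ × ℂ) : dw (fun q => conj (f q)) p = conj (dwb f p) := by
  simp only [dw, dwb, fderiv_conj_apply, map_mul, map_add, map_div₀, map_one, map_ofNat, conj_I]
  ring

@[fun_prop]
lemma DifferentiableAt.normSq {E : Type*} [NormedAddCommGroup E] [NormedSpace ℝ E] {f : E → ℂ}
    {x : E} (hf : DifferentiableAt ℝ f x) : DifferentiableAt ℝ (fun y => normSq (f y)) x := by
  simpa only [Complex.sq_norm] using hf.norm_sq ℂ

lemma ofReal_one_add_mul_normSq (ε : ℝ) (z : ℂ) :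
    ((1 + ε * normSq z : ℝ) : ℂ) = 1 + ε * (z * conj z) := by
  rw [mul_conj]; push_cast; ring

lemma one_add_mul_mul_conj_ne_zero {ε : ℝ} {z : ℂ} (hz : 1 + ε * normSq z ≠ 0) :
    (1 + ε * (z * conj z) : ℂ) ≠ 0 := by
  rw [← ofReal_one_add_mul_normSq]; exact_mod_cast hz

noncomputable def liftCoeff (ε : ℝ) (q : ℂ × ℂ) : ℂ :=
  ε * 2 * q.2 * conj q.1 / ((1 + ε * normSq q.1 : ℝ) : ℂ)

lemma liftCoeff_eq (ε : ℝ) : liftCoeff ε =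
    fun q : ℂ × ℂ => ε * 2 * (q.2 * (conj q.1 * (1 + ε * (q.1 * conj q.1))⁻¹)) := by
  funext q; rw [liftCoeff, ofReal_one_add_mul_normSq, div_eq_mul_inv]; ring

lemma X₁_eq (ε : ℝ) : X₁ ε = fun q => (1, 0, liftCoeff ε q, 0) := rfl

lemma X₂_eq (ε : ℝ) : X₂ ε = fun q => (0, 1, 0, conj (liftCoeff ε q)) := by
  funext q
  simp only [X₂, liftCoeff, map_div₀, map_mul, conj_ofReal, conj_conj, map_ofNat]

section Computations

variable {ε : ℝ} {p : ℂ × ℂ}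

lemma dzb_liftCoeff (hz : 1 + ε * normSq p.1 ≠ 0) :
    dzb (liftCoeff ε) p = ε * 2 * p.2 / ((1 + ε * normSq p.1 : ℝ) : ℂ) ^ 2 := by
  have hE := one_add_mul_mul_conj_ne_zero hz
  rw [dzb_eq_wirtingerBar, liftCoeff_eq]
  simp (disch := first | fun_prop | assumption) only [wirtingerBar_fderiv_mul,
    wirtingerBar_fderiv_inv, wirtingerBar_fderiv_const_add, wirtingerBar_fderiv_const,
    wirtingerBar_fderiv_fst, wirtingerBar_fderiv_snd, wirtingerBar_fderiv_conj_fst, map_one]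
  rw [ofReal_one_add_mul_normSq]
  field_simp
  ring

lemma dwb_liftCoeff (hz : 1 + ε * normSq p.1 ≠ 0) : dwb (liftCoeff ε) p = 0 := by
  have hE := one_add_mul_mul_conj_ne_zero hz
  rw [dwb_eq_wirtingerBar, liftCoeff_eq]
  simp (disch := first | fun_prop | assumption) only [wirtingerBar_fderiv_mul,
    wirtingerBar_fderiv_inv, wirtingerBar_fderiv_const_add, wirtingerBar_fderiv_const,
    wirtingerBar_fderiv_fst, wirtingerBar_fderiv_snd, wirtingerBar_fderiv_conj_fst, map_zero,
    mul_zero, add_zero]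

open Filter Topology in
/-- `√x * √x = x` fails for `x < 0` (where `Real.sqrt` is `0`), so `a²` is the radicand only
near `p`. -/
lemma wfun_mul_self_eventuallyEq {c1 : ℝ} (hz : 1 + ε * normSq p.1 ≠ 0)
    (ha : 0 < c1 + ε * 4 * normSq p.2 / (1 + ε * normSq p.1) ^ 2) :
    (fun q => wfun ε c1 q * wfun ε c1 q) =ᶠ[𝓝 p]
      fun q => c1 + ε * 4 * (q.2 * conj q.2) *
        ((1 + ε * (q.1 * conj q.1)) * (1 + ε * (q.1 * conj q.1)))⁻¹ := by
  have hg : ContinuousAt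
      (fun q : ℂ × ℂ => c1 + ε * 4 * normSq q.2 / (1 + ε * normSq q.1) ^ 2) p := by
    fun_prop (disch := exact pow_ne_zero 2 hz)
  filter_upwards [hg.eventually (lt_mem_nhds ha)] with q hq
  rw [wfun, ← ofReal_mul, Real.mul_self_sqrt hq.le, mul_conj, mul_conj]
  push_cast
  ring

lemma wfun_mul_dwb_wfun {c1 : ℝ} (hz : 1 + ε * normSq p.1 ≠ 0)
    (ha : 0 < c1 + ε * 4 * normSq p.2 / (1 + ε * normSq p.1) ^ 2) :
    wfun ε c1 p * dwb (wfun ε c1) p = ε * 2 * p.2 / ((1 + ε * normSq p.1 : ℝ) : ℂ) ^ 2 := by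
  have hg : DifferentiableAt ℝ
      (fun q : ℂ × ℂ => c1 + ε * 4 * normSq q.2 / (1 + ε * normSq q.1) ^ 2) p := by
    fun_prop (disch := exact pow_ne_zero 2 hz)
  have hw : DifferentiableAt ℝ (wfun ε c1) p := by
    unfold wfun; fun_prop (disch := exact ha.ne')
  have hE := one_add_mul_mul_conj_ne_zero hz
  have hEE := mul_ne_zero hE hE
  have hleib := wirtingerBar_fderiv_mul (0, 1) hw hw
  rw [(wfun_mul_self_eventuallyEq hz ha).fderiv_eq] at hleib
  simp (disch := first | assumption | fun_prop (disch := assumption)) only [wirtingerBar_fderiv_mul,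
    wirtingerBar_fderiv_inv, wirtingerBar_fderiv_const_add, wirtingerBar_fderiv_const,
    wirtingerBar_fderiv_fst, wirtingerBar_fderiv_snd, wirtingerBar_fderiv_conj_fst,
    wirtingerBar_fderiv_conj_snd, map_zero, map_one, mul_zero, add_zero, zero_add,
    mul_one] at hleib
  rw [dwb_eq_wirtingerBar, ofReal_one_add_mul_normSq]
  linear_combination -hleib / 2

lemma dz_conj_liftCoeff (hz : 1 + ε * normSq p.1 ≠ 0) :
    dz (fun q => conj (liftCoeff ε q)) p =
      ε * 2 * conj p.2 / ((1 + ε * normSq p.1 : ℝ) : ℂ) ^ 2 := by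
  rw [dz_conj, dzb_liftCoeff hz]
  simp only [map_div₀, map_mul, map_pow, conj_ofReal, map_ofNat]

lemma dw_conj_liftCoeff (hz : 1 + ε * normSq p.1 ≠ 0) :
    dw (fun q => conj (liftCoeff ε q)) p = 0 := by
  rw [dw_conj, dwb_liftCoeff hz, map_zero]

lemma wfun_mul_dw_wfun {c1 : ℝ} (hz : 1 + ε * normSq p.1 ≠ 0)
    (ha : 0 < c1 + ε * 4 * normSq p.2 / (1 + ε * normSq p.1) ^ 2) :
    wfun ε c1 p * dw (wfun ε c1) p =
      ε * 2 * conj p.2 / ((1 + ε * normSq p.1 : ℝ) : ℂ) ^ 2 := by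
  have hreal : (fun q => conj (wfun ε c1 q)) = wfun ε c1 := funext fun q => conj_ofReal _
  calc wfun ε c1 p * dw (wfun ε c1) p = conj (wfun ε c1 p * dwb (wfun ε c1) p) := by
        rw [map_mul, ← dw_conj, hreal, congrFun hreal p]
    _ = _ := by
        rw [wfun_mul_dwb_wfun hz ha]
        simp only [map_div₀, map_mul, map_pow, conj_ofReal, map_ofNat]

end Computations

noncomputable def verticalVF (ε : ℝ) : VF := fun q =>
  (0, 0, -((ε : ℂ) * (2 / ((1 + ε * normSq q.1 : ℝ) : ℂ) ^ 2) * q.2),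
    (ε : ℂ) * (2 / ((1 + ε * normSq q.1 : ℝ) : ℂ) ^ 2) * conj q.2)

lemma bracketVF_X₁_X₂ {ε : ℝ} {p : ℂ × ℂ} (hz : 1 + ε * normSq p.1 ≠ 0) :
    bracketVF (X₁ ε) (X₂ ε) p = verticalVF ε p := by
  rw [X₁_eq, X₂_eq]
  simp only [bracketVF, appVF, verticalVF, dz_const, dzb_const, dw_const, dwb_const,
    dzb_liftCoeff hz, dwb_liftCoeff hz, dz_conj_liftCoeff hz, dw_conj_liftCoeff hz,
    Prod.mk.injEq]
  refine ⟨by ring, by ring, by ring, by ring⟩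

lemma bracketVF_wfun {ε c1 : ℝ} {p : ℂ × ℂ} (hz : 1 + ε * normSq p.1 ≠ 0)
    (ha : 0 < c1 + ε * 4 * normSq p.2 / (1 + ε * normSq p.1) ^ 2) :
    bracketVF (fun q => (0, 0, wfun ε c1 q, 0)) (fun q => (0, 0, 0, wfun ε c1 q)) p =
      verticalVF ε p := by
  simp only [bracketVF, appVF, verticalVF, dz_const, dzb_const, dw_const, dwb_const,
    Prod.mk.injEq]
  refine ⟨by ring, by ring, ?_, ?_⟩
  · linear_combination -wfun_mul_dwb_wfun hz ha
  · linear_combination wfun_mul_dw_wfun hz ha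

theorem stmt_10_general (ε c1 : ℝ) (p : ℂ × ℂ)
    (hz : 0 < 1 + ε * Complex.normSq p.1)
    (ha : 0 < c1 + ε * 4 * Complex.normSq p.2 / (1 + ε * Complex.normSq p.1) ^ 2) :
    bracketVF (X₁ ε) (X₂ ε) p =
      bracketVF (fun q => (0, 0, wfun ε c1 q, 0))
        (fun q => (0, 0, 0, wfun ε c1 q)) p ∧
    bracketVF (X₁ ε) (X₂ ε) p =
      (0, 0,
       -((ε : ℂ) * (2 / ((1 + ε * Complex.normSq p.1 : ℝ) : ℂ) ^ 2) * p.2),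
       (ε : ℂ) * (2 / ((1 + ε * Complex.normSq p.1 : ℝ) : ℂ) ^ 2) *
         (starRingEnd ℂ) p.2) := by
  rw [bracketVF_wfun hz.ne' ha, bracketVF_X₁_X₂ hz.ne']
  exact ⟨rfl, rfl⟩

/-- `[X₁, X₂] = [a ∂_w, a ∂_w̄]`, both equal to
`ε (2/(1+ε|z|²)²)(w̄ ∂_w̄ − w ∂_w)`. -/
theorem stmt_10 (ε c1 : ℝ) (hε : ε = 1 ∨ ε = -1) (hc1 : 0 < c1) (p : ℂ × ℂ)
    (hz : 0 < 1 + ε * Complex.normSq p.1)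
    (ha : 0 < c1 + ε * 4 * Complex.normSq p.2 / (1 + ε * Complex.normSq p.1) ^ 2) :
    bracketVF (X₁ ε) (X₂ ε) p =
      bracketVF (fun q => (0, 0, wfun ε c1 q, 0))
        (fun q => (0, 0, 0, wfun ε c1 q)) p ∧
    bracketVF (X₁ ε) (X₂ ε) p =
      (0, 0,
       -((ε : ℂ) * (2 / ((1 + ε * Complex.normSq p.1 : ℝ) : ℂ) ^ 2) * p.2),
       (ε : ℂ) * (2 / ((1 + ε * Complex.normSq p.1 : ℝ) : ℂ) ^ 2) *
         (starRingEnd ℂ) p.2) :=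
  stmt_10_general ε c1 p hz ha
end

section
/- The system of PDEs (1±|z|²)∂a/∂z ± 2wz̄ ∂a/∂w = 0 and (1±|z|²)² a² ∂a/∂w ∓ 2w̄ a ± 2zw̄(1±|z|²)∂a/∂z + 4|w|²|z|² ∂a/∂w = 0, for a real positive C¹ function a(z,w) on a connected open subset of ℂ², is satisfied by a = sqrt(c1 ± 4|w|²/(1±|z|²)²) for any constant c1 > 0. -/
/-!
The weight `a` depends on `(z, w)` only through `u = |z|²` and `v = |w|²`, and
`∂|z|²/∂z = z̄`, `∂|w|²/∂w = w̄`; so by the chain rule `∂a/∂z = a_u z̄` and `∂a/∂w = a_v w̄`.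
For `a = √(c1 + 4εv/D²)` with `D = 1 + εu` one finds `a_u = -4ε²v/(aD³)` and `a_v = 2ε/(aD²)`,
and both equations become rational identities in `z, z̄, w, w̄, a`; the first holds for every `ε`,
the second needs `ε² = 1`.
-/

open Complex

open ComplexConjugate

theorem Complex.hasStrictFDerivAt_normSq (z : ℂ) :
    HasStrictFDerivAt normSq (2 • innerSL ℝ z) z := by
  rw [show (normSq : ℂ → ℝ) = (‖·‖ ^ 2) from funext normSq_eq_norm_sq]
  exact hasStrictFDerivAt_norm_sq z

section FunctionsOfNormSq

variable {Φ : ℝ × ℝ → ℝ} {p : ℂ × ℂ}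

theorem hasFDerivAt_ofReal_comp_normSq {L : ℝ × ℝ →L[ℝ] ℝ}
    (hΦ : HasFDerivAt Φ L (normSq p.1, normSq p.2)) :
    HasFDerivAt (fun q : ℂ × ℂ => (Φ (normSq q.1, normSq q.2) : ℂ))
      (ofRealCLM.comp (L.comp
        (((2 • innerSL ℝ p.1).comp (.fst ℝ ℂ ℂ)).prod ((2 • innerSL ℝ p.2).comp (.snd ℝ ℂ ℂ)))))
      p :=
  ofRealCLM.hasFDerivAt.comp p <| hΦ.comp p <|
    ((hasStrictFDerivAt_normSq p.1).hasFDerivAt.comp p hasFDerivAt_fst).prodMk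
      ((hasStrictFDerivAt_normSq p.2).hasFDerivAt.comp p hasFDerivAt_snd)

theorem dz_ofReal_comp_normSq {Φz : ℝ} (hΦ : DifferentiableAt ℝ Φ (normSq p.1, normSq p.2))
    (hz : HasDerivAt (fun u => Φ (u, normSq p.2)) Φz (normSq p.1)) :
    dz (fun q => (Φ (normSq q.1, normSq q.2) : ℂ)) p = Φz * conj p.1 := by
  have hL : fderiv ℝ Φ (normSq p.1, normSq p.2) (1, 0) = Φz :=
    (hΦ.hasFDerivAt.comp_hasDerivAt (normSq p.1)
      ((hasDerivAt_id _).prodMk (hasDerivAt_const _ _))).unique hz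
  have hL_smul (a : ℝ) : fderiv ℝ Φ (normSq p.1, normSq p.2) (a, 0) = a * Φz := by
    rw [← hL, ← smul_eq_mul, ← map_smul, Prod.smul_mk, smul_eq_mul, mul_one, smul_zero]
  rw [dz, (hasFDerivAt_ofReal_comp_normSq hΦ.hasFDerivAt).fderiv]
  simp only [ContinuousLinearMap.comp_apply, ContinuousLinearMap.prod_apply,
    ContinuousLinearMap.coe_fst', ContinuousLinearMap.coe_snd', smul_apply,
    coe_innerSL_apply, Complex.inner, inner_zero_right, smul_zero, hL_smul, ofRealCLM_apply,
    one_mul, I_mul_re, conj_re, conj_im, nsmul_eq_mul]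
  linear_combination (norm := (push_cast; ring)) (Φz / 2 : ℂ) * (sub_conj p.1 - add_conj p.1)

theorem dw_ofReal_comp_normSq {Φw : ℝ} (hΦ : DifferentiableAt ℝ Φ (normSq p.1, normSq p.2))
    (hw : HasDerivAt (fun v => Φ (normSq p.1, v)) Φw (normSq p.2)) :
    dw (fun q => (Φ (normSq q.1, normSq q.2) : ℂ)) p = Φw * conj p.2 := by
  have hL : fderiv ℝ Φ (normSq p.1, normSq p.2) (0, 1) = Φw :=
    (hΦ.hasFDerivAt.comp_hasDerivAt (normSq p.2)
      ((hasDerivAt_const _ _).prodMk (hasDerivAt_id _))).unique hw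
  have hL_smul (a : ℝ) : fderiv ℝ Φ (normSq p.1, normSq p.2) (0, a) = a * Φw := by
    rw [← hL, ← smul_eq_mul, ← map_smul, Prod.smul_mk, smul_eq_mul, mul_zero, smul_eq_mul, mul_one]
  rw [dw, (hasFDerivAt_ofReal_comp_normSq hΦ.hasFDerivAt).fderiv]
  simp only [ContinuousLinearMap.comp_apply, ContinuousLinearMap.prod_apply,
    ContinuousLinearMap.coe_fst', ContinuousLinearMap.coe_snd', smul_apply,
    coe_innerSL_apply, Complex.inner, inner_zero_right, smul_zero, hL_smul, ofRealCLM_apply,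
    one_mul, I_mul_re, conj_re, conj_im, nsmul_eq_mul]
  linear_combination (norm := (push_cast; ring)) (Φw / 2 : ℂ) * (sub_conj p.2 - add_conj p.2)

end FunctionsOfNormSq

noncomputable def weightProfile (ε c1 : ℝ) (x : ℝ × ℝ) : ℝ :=
  √(c1 + ε * 4 * x.2 / (1 + ε * x.1) ^ 2)

theorem wfun_eq_weightProfile (ε c1 : ℝ) :
    wfun ε c1 = fun q => (weightProfile ε c1 (normSq q.1, normSq q.2) : ℂ) :=
  rfl

section WeightProfile

variable {ε c1 u v : ℝ} (hD : 1 + ε * u ≠ 0) (hf : c1 + ε * 4 * v / (1 + ε * u) ^ 2 ≠ 0)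
include hD hf

theorem differentiableAt_weightProfile : DifferentiableAt ℝ (weightProfile ε c1) (u, v) :=
  DifferentiableAt.sqrt (by fun_prop (disch := simpa using hD)) hf

theorem hasDerivAt_weightProfile_fst :
    HasDerivAt (fun u => weightProfile ε c1 (u, v))
      (-(4 * ε ^ 2 * v) / (weightProfile ε c1 (u, v) * (1 + ε * u) ^ 3)) u := by
  have hg := ((hasDerivAt_const u (ε * 4 * v)).fun_div
    ((((hasDerivAt_id' u).const_mul ε).const_add 1).fun_pow 2) (pow_ne_zero 2 hD)).const_add c1
  refine (hg.sqrt hf).congr_deriv ?_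
  change _ / (2 * weightProfile ε c1 (u, v)) = _
  field_simp
  ring

theorem hasDerivAt_weightProfile_snd :
    HasDerivAt (fun v => weightProfile ε c1 (u, v))
      (2 * ε / (weightProfile ε c1 (u, v) * (1 + ε * u) ^ 2)) v := by
  have hg := (((hasDerivAt_id' v).const_mul (ε * 4)).div_const ((1 + ε * u) ^ 2)).const_add c1
  refine (hg.sqrt hf).congr_deriv ?_
  change _ / (2 * weightProfile ε c1 (u, v)) = _
  field_simp
  ring

end WeightProfile

section Wfun

variable {ε c1 : ℝ} {p : ℂ × ℂ} (hD : 1 + ε * normSq p.1 ≠ 0)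
  (hf : c1 + ε * 4 * normSq p.2 / (1 + ε * normSq p.1) ^ 2 ≠ 0)
include hD hf

theorem dz_wfun : dz (wfun ε c1) p =
    ((-(4 * ε ^ 2 * normSq p.2) /
      (weightProfile ε c1 (normSq p.1, normSq p.2) * (1 + ε * normSq p.1) ^ 3) : ℝ) : ℂ) *
        conj p.1 :=
  wfun_eq_weightProfile ε c1 ▸
    dz_ofReal_comp_normSq (differentiableAt_weightProfile hD hf) (hasDerivAt_weightProfile_fst hD hf)

theorem dw_wfun : dw (wfun ε c1) p =
    ((2 * ε / (weightProfile ε c1 (normSq p.1, normSq p.2) * (1 + ε * normSq p.1) ^ 2) : ℝ) : ℂ) *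
        conj p.2 :=
  wfun_eq_weightProfile ε c1 ▸
    dw_ofReal_comp_normSq (differentiableAt_weightProfile hD hf) (hasDerivAt_weightProfile_snd hD hf)

end Wfun

theorem stmt_14_general (ε c1 : ℝ) (hε : ε = 1 ∨ ε = -1) (p : ℂ × ℂ)
    (hz : 0 < 1 + ε * Complex.normSq p.1)
    (ha : 0 < c1 + ε * 4 * Complex.normSq p.2 / (1 + ε * Complex.normSq p.1) ^ 2) :
    ((1 + ε * Complex.normSq p.1 : ℝ) : ℂ) * dz (wfun ε c1) p +
        (ε : ℂ) * 2 * p.2 * (starRingEnd ℂ) p.1 * dw (wfun ε c1) p = 0 ∧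
    ((1 + ε * Complex.normSq p.1 : ℝ) : ℂ) ^ 2 * (wfun ε c1 p) ^ 2 *
          dw (wfun ε c1) p -
        (ε : ℂ) * 2 * (starRingEnd ℂ) p.2 * wfun ε c1 p +
        (ε : ℂ) * 2 * p.1 * (starRingEnd ℂ) p.2 *
          ((1 + ε * Complex.normSq p.1 : ℝ) : ℂ) * dz (wfun ε c1) p +
        4 * ((Complex.normSq p.2 : ℝ) : ℂ) * ((Complex.normSq p.1 : ℝ) : ℂ) *
          dw (wfun ε c1) p = 0 := by
  have hε2 : (ε : ℂ) ^ 2 = 1 := by rcases hε with rfl | rfl <;> norm_num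
  have hD : ((1 + ε * normSq p.1 : ℝ) : ℂ) ≠ 0 := ofReal_ne_zero.2 hz.ne'
  have ha0 : ((weightProfile ε c1 (normSq p.1, normSq p.2) : ℝ) : ℂ) ≠ 0 :=
    ofReal_ne_zero.2 (Real.sqrt_pos.2 ha).ne'
  rw [dz_wfun hz.ne' ha.ne', dw_wfun hz.ne' ha.ne', wfun_eq_weightProfile]
  push_cast at hD ⊢
  constructor
  · field_simp
    linear_combination 4 * (ε : ℂ) ^ 2 * conj p.1 * mul_conj p.2
  · field_simp
    linear_combination -8 * ε * normSq p.2 * conj p.2 * (mul_conj p.1 + p.1 * conj p.1 * hε2)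

/-- The integrability PDE system
`(1±|z|²) ∂a/∂z ± 2wz̄ ∂a/∂w = 0` and
`(1±|z|²)² a² ∂a/∂w ∓ 2w̄ a ± 2zw̄(1±|z|²) ∂a/∂z + 4|w|²|z|² ∂a/∂w = 0`
is satisfied by `a = sqrt (c1 ± 4|w|²/(1±|z|²)²)` for any constant `c1 > 0`. -/
theorem stmt_14 (ε c1 : ℝ) (hε : ε = 1 ∨ ε = -1) (hc1 : 0 < c1) (p : ℂ × ℂ)
    (hz : 0 < 1 + ε * Complex.normSq p.1)
    (ha : 0 < c1 + ε * 4 * Complex.normSq p.2 / (1 + ε * Complex.normSq p.1) ^ 2) :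
    ((1 + ε * Complex.normSq p.1 : ℝ) : ℂ) * dz (wfun ε c1) p +
        (ε : ℂ) * 2 * p.2 * (starRingEnd ℂ) p.1 * dw (wfun ε c1) p = 0 ∧
    ((1 + ε * Complex.normSq p.1 : ℝ) : ℂ) ^ 2 * (wfun ε c1 p) ^ 2 *
          dw (wfun ε c1) p -
        (ε : ℂ) * 2 * (starRingEnd ℂ) p.2 * wfun ε c1 p +
        (ε : ℂ) * 2 * p.1 * (starRingEnd ℂ) p.2 *
          ((1 + ε * Complex.normSq p.1 : ℝ) : ℂ) * dz (wfun ε c1) p +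
        4 * ((Complex.normSq p.2 : ℝ) : ℂ) * ((Complex.normSq p.1 : ℝ) : ℂ) *
          dw (wfun ε c1) p = 0 :=
  stmt_14_general ε c1 hε p hz ha
end
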